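/- arXiv:1001.4268 — 4 statements merged into one kernel-verified Lean document; each statement's English description precedes it below -/
import Mathlib

section
/- Every 4-connected configuration is brodable. -/
/-!
The proof is an induction with a stronger invariant: for every cell `c` of a 4-connected `C`
and any orientations of the two diagonals of `c`, some embroidery of `C` starts with the
inferior diagonal and ends with the superior one. For a single cell this holds because every
corner on one diagonal is adjacent to every corner on the other. Otherwise a component `K` of
`C \ {c}` touches `c` at a neighbour `d`, and both `K` and `C \ K` are 4-connected. The common
side of `c` and `d` has one end `x` on the superior diagonal of `c` and the inferior one of `d`,
and the other end `y` on the inferior diagonal of `c` and the superior one of `d`. Embroider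
`K` from `x` to `y`, and `C \ K` starting with the inferior diagonal of `c` drawn into `y`;
moving that first stitch to the front in the prescribed orientation and inserting the
embroidery of `K` behind it gives an embroidery of `C`.
-/

/-- Two vertices of `ℤ²` are adjacent if their Euclidean distance is `1`. -/
def Adj (u v : ℤ × ℤ) : Prop := (u.1 - v.1) ^ 2 + (u.2 - v.2) ^ 2 = 1

/-- The inferior diagonal of the cell `(a, b)`: the unordered pair `{(a,b), (a+1,b+1)}`. -/
def infDiag (c : ℤ × ℤ) : Sym2 (ℤ × ℤ) := s(c, (c.1 + 1, c.2 + 1))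

/-- The superior diagonal of the cell `(a, b)`: the unordered pair `{(a,b+1), (a+1,b)}`. -/
def supDiag (c : ℤ × ℤ) : Sym2 (ℤ × ℤ) := s((c.1, c.2 + 1), (c.1 + 1, c.2))

/-- The unordered pair underlying an ordered pair of vertices. -/
def diagOf (e : (ℤ × ℤ) × (ℤ × ℤ)) : Sym2 (ℤ × ℤ) := s(e.1, e.2)

/-- `d 0, d 1, …, d (2n - 1)` (with `n = C.card`) is an embroidery of the
configuration `C`. -/
def IsEmbroidery (C : Finset (ℤ × ℤ)) (d : ℕ → (ℤ × ℤ) × (ℤ × ℤ)) : Prop :=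
  (∀ i < 2 * C.card, ∃ c ∈ C, diagOf (d i) = infDiag c ∨ diagOf (d i) = supDiag c) ∧
  (∀ c ∈ C, ∃! i, i < 2 * C.card ∧ diagOf (d i) = infDiag c) ∧
  (∀ c ∈ C, ∃! i, i < 2 * C.card ∧ diagOf (d i) = supDiag c) ∧
  (∀ c ∈ C, ∀ i j, i < 2 * C.card → j < 2 * C.card →
    diagOf (d i) = infDiag c → diagOf (d j) = supDiag c → i < j) ∧
  (∀ i, i + 1 < 2 * C.card → Adj (d i).2 (d (i + 1)).1)

/-- A closed embroidery: moreover the end of the last diagonal is adjacent to the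
start of the first one. -/
def IsClosedEmbroidery (C : Finset (ℤ × ℤ)) (d : ℕ → (ℤ × ℤ) × (ℤ × ℤ)) : Prop :=
  IsEmbroidery C d ∧ Adj (d (2 * C.card - 1)).2 (d 0).1

/-- A configuration is brodable if it admits an embroidery. -/
def Brodable (C : Finset (ℤ × ℤ)) : Prop := ∃ d, IsEmbroidery C d

/-- A configuration is strongly brodable if it admits a closed embroidery. -/
def StronglyBrodable (C : Finset (ℤ × ℤ)) : Prop := ∃ d, IsClosedEmbroidery C d

/-- Two cells are 4-adjacent if they differ by `(±1, 0)` or `(0, ±1)`. -/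
def FourAdj (p q : ℤ × ℤ) : Prop := (p.1 - q.1) ^ 2 + (p.2 - q.2) ^ 2 = 1

/-- A configuration is 4-connected if it is nonempty and any two of its cells
are joined by a chain of cells of the configuration in which consecutive cells
are 4-adjacent. -/
def FourConnected (C : Finset (ℤ × ℤ)) : Prop :=
  C.Nonempty ∧ ∀ p ∈ C, ∀ q ∈ C,
    Relation.ReflTransGen (fun a b => a ∈ C ∧ b ∈ C ∧ FourAdj a b) p q

theorem fourAdj_cases {p q : ℤ × ℤ} (h : FourAdj p q) :
    (q.1 = p.1 + 1 ∧ q.2 = p.2) ∨ (q.1 = p.1 - 1 ∧ q.2 = p.2) ∨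
      (q.1 = p.1 ∧ q.2 = p.2 + 1) ∨ (q.1 = p.1 ∧ q.2 = p.2 - 1) := by
  unfold FourAdj at h
  have h1 : (p.1 - q.1) ^ 2 ≤ 1 := by nlinarith [sq_nonneg (p.2 - q.2)]
  have h2 : (p.2 - q.2) ^ 2 ≤ 1 := by nlinarith [sq_nonneg (p.1 - q.1)]
  rw [sq_le_one_iff_abs_le_one, abs_le] at h1 h2
  have hx : p.1 - q.1 = -1 ∨ p.1 - q.1 = 0 ∨ p.1 - q.1 = 1 := by omega
  have hy : p.2 - q.2 = -1 ∨ p.2 - q.2 = 0 ∨ p.2 - q.2 = 1 := by omega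
  rcases hx with hx | hx | hx <;> rcases hy with hy | hy | hy <;> rw [hx, hy] at h <;>
    norm_num at h <;> omega

/- A corner lies on the inferior diagonal of a cell iff its coordinate sum has the parity of the
cell's, and 4-adjacent cells have opposite parities. -/
theorem exists_shared_corners {c d : ℤ × ℤ} (h : FourAdj c d) :
    ∃ x y, x ∈ supDiag c ∧ x ∈ infDiag d ∧ y ∈ infDiag c ∧ y ∈ supDiag d := by
  obtain ⟨a, b⟩ := c
  rcases fourAdj_cases h with h | h | h | h
  · refine ⟨(a + 1, b), (a + 1, b + 1), ?_⟩
    simp [infDiag, supDiag, Prod.ext_iff]; omega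
  · refine ⟨(a, b + 1), (a, b), ?_⟩
    simp [infDiag, supDiag, Prod.ext_iff]; omega
  · refine ⟨(a, b + 1), (a + 1, b + 1), ?_⟩
    simp [infDiag, supDiag, Prod.ext_iff]; omega
  · refine ⟨(a + 1, b), (a, b), ?_⟩
    simp [infDiag, supDiag, Prod.ext_iff]; omega

theorem adj_of_mem_infDiag_of_mem_supDiag {c x y : ℤ × ℤ} (hx : x ∈ infDiag c)
    (hy : y ∈ supDiag c) : Adj x y := by
  simp only [infDiag, supDiag, Sym2.mem_iff] at hx hy
  rcases hx with rfl | rfl <;> rcases hy with rfl | rfl <;> simp [Adj]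

theorem infDiag_injective : Function.Injective infDiag := by
  intro c d h
  simp [infDiag, Prod.ext_iff] at h
  ext <;> omega

theorem supDiag_injective : Function.Injective supDiag := by
  intro c d h
  simp [supDiag, Prod.ext_iff] at h
  ext <;> omega

theorem infDiag_ne_supDiag (c d : ℤ × ℤ) : infDiag c ≠ supDiag d := by
  simp [infDiag, supDiag, Prod.ext_iff]
  omega

instance : Std.Symm FourAdj :=
  ⟨fun p q h => by unfold FourAdj at *; linarith [h]⟩

theorem fst_mem_diagOf (e : (ℤ × ℤ) × (ℤ × ℤ)) : e.1 ∈ diagOf e := Sym2.mem_mk_left _ _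

theorem snd_mem_diagOf (e : (ℤ × ℤ) × (ℤ × ℤ)) : e.2 ∈ diagOf e := Sym2.mem_mk_right _ _

theorem diagOf_mk_other {x : ℤ × ℤ} {z : Sym2 (ℤ × ℤ)} (h : x ∈ z) :
    diagOf (x, Sym2.Mem.other h) = z :=
  Sym2.other_spec h

theorem diagOf_other_mk {y : ℤ × ℤ} {z : Sym2 (ℤ × ℤ)} (h : y ∈ z) :
    diagOf (Sym2.Mem.other h, y) = z :=
  Sym2.eq_swap.trans (Sym2.other_spec h)

section Connectivity

open Relation

variable {α : Type*} (r : α → α → Prop)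

def InducedOn (s : Finset α) (a b : α) : Prop := a ∈ s ∧ b ∈ s ∧ r a b

def IsConnectedOn (s : Finset α) : Prop :=
  s.Nonempty ∧ ∀ p ∈ s, ∀ q ∈ s, ReflTransGen (InducedOn r s) p q

open Classical in
noncomputable def componentIn (s : Finset α) (p : α) : Finset α :=
  {q ∈ s | ReflTransGen (InducedOn r s) p q}

variable {r}

instance [Std.Symm r] (s : Finset α) : Std.Symm (InducedOn r s) :=
  ⟨fun _ _ ⟨ha, hb, h⟩ => ⟨hb, ha, symm h⟩⟩

theorem mem_componentIn {s : Finset α} {p q : α} :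
    q ∈ componentIn r s p ↔ q ∈ s ∧ ReflTransGen (InducedOn r s) p q := by
  classical
  simp [componentIn]

theorem reflTransGen_componentIn {s : Finset α} {p q : α}
    (h : ReflTransGen (InducedOn r s) p q) :
    ReflTransGen (InducedOn r (componentIn r s p)) p q := by
  induction h with
  | refl => exact .refl
  | tail hpb hbq ih =>
    exact ih.tail
      ⟨mem_componentIn.2 ⟨hbq.1, hpb⟩, mem_componentIn.2 ⟨hbq.2.1, hpb.tail hbq⟩, hbq.2.2⟩

theorem isConnectedOn_componentIn [Std.Symm r] {s : Finset α} {p : α} (hp : p ∈ s) :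
    IsConnectedOn r (componentIn r s p) := by
  refine ⟨⟨p, mem_componentIn.2 ⟨hp, .refl⟩⟩, fun a ha b hb => ?_⟩
  exact (symm (reflTransGen_componentIn (mem_componentIn.1 ha).2)).trans
    (reflTransGen_componentIn (mem_componentIn.1 hb).2)

variable [DecidableEq α] {C : Finset α} {c p : α}

theorem exists_adj_of_mem_componentIn_erase {q : α} (hq : q ∈ componentIn r (C.erase c) p)
    (h : ReflTransGen (InducedOn r C) q c) : ∃ d ∈ componentIn r (C.erase c) p, r d c := by
  induction h using ReflTransGen.head_induction_on with
  | refl => exact absurd (mem_componentIn.1 hq).1 (Finset.notMem_erase c C)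
  | @head q q' hqq' _ ih =>
    by_cases hq' : q' = c
    · exact ⟨q, hq, hq' ▸ hqq'.2.2⟩
    · have hq'C : q' ∈ C.erase c := Finset.mem_erase.2 ⟨hq', hqq'.2.1⟩
      obtain ⟨hqC, hpq⟩ := mem_componentIn.1 hq
      exact ih (mem_componentIn.2 ⟨hq'C, hpq.tail ⟨hqC, hq'C, hqq'.2.2⟩⟩)

theorem reflTransGen_sdiff_componentIn [Std.Symm r] {q : α}
    (hq : q ∈ C \ componentIn r (C.erase c) p) (h : ReflTransGen (InducedOn r C) q c) :
    ReflTransGen (InducedOn r (C \ componentIn r (C.erase c) p)) q c := by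
  induction h using ReflTransGen.head_induction_on with
  | refl => exact .refl
  | @head q q' hqq' _ ih =>
    by_cases hqc : q = c
    · exact hqc ▸ .refl
    obtain ⟨hqC, hqK⟩ := Finset.mem_sdiff.1 hq
    have hq'K : q' ∉ componentIn r (C.erase c) p := fun hq'K => by
      obtain ⟨hq'C, hpq'⟩ := mem_componentIn.1 hq'K
      have hqC' : q ∈ C.erase c := Finset.mem_erase.2 ⟨hqc, hqC⟩
      exact hqK (mem_componentIn.2 ⟨hqC', hpq'.tail ⟨hq'C, hqC', symm hqq'.2.2⟩⟩)
    have hq' : q' ∈ C \ componentIn r (C.erase c) p := Finset.mem_sdiff.2 ⟨hqq'.2.1, hq'K⟩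
    exact (ih hq').head ⟨hq, hq', hqq'.2.2⟩

theorem IsConnectedOn.exists_split [Std.Symm r] (hC : IsConnectedOn r C) (hc : c ∈ C)
    (hne : C ≠ {c}) : ∃ K ⊆ C, c ∉ K ∧ IsConnectedOn r K ∧ IsConnectedOn r (C \ K) ∧
      ∃ d ∈ K, r d c := by
  obtain ⟨p, hp⟩ : (C.erase c).Nonempty := by
    rw [Finset.nonempty_iff_ne_empty, Ne, Finset.erase_eq_empty_iff]
    exact fun h => h.elim (fun h => by simp [h] at hc) hne
  set K := componentIn r (C.erase c) p
  have hKC : K ⊆ C := fun q hq => Finset.mem_of_mem_erase (mem_componentIn.1 hq).1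
  have hcK : c ∉ K := fun hcK => Finset.notMem_erase c C (mem_componentIn.1 hcK).1
  have hcR : c ∈ C \ K := Finset.mem_sdiff.2 ⟨hc, hcK⟩
  have hpK : p ∈ K := mem_componentIn.2 ⟨hp, .refl⟩
  refine ⟨K, hKC, hcK, isConnectedOn_componentIn hp, ⟨⟨c, hcR⟩, fun a ha b hb => ?_⟩,
    exists_adj_of_mem_componentIn_erase hpK (hC.2 p (hKC hpK) c hc)⟩
  exact (reflTransGen_sdiff_componentIn ha (hC.2 a (Finset.sdiff_subset ha) c hc)).trans
    (symm (reflTransGen_sdiff_componentIn hb (hC.2 b (Finset.sdiff_subset hb) c hc)))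

end Connectivity

namespace List

variable {β : Type*} {M : List β} {x y z : β}

theorem Nodup.existsUnique_getD_eq (hM : M.Nodup) (hx : x ∈ M) :
    ∃! i, i < M.length ∧ M.getD i z = x := by
  obtain ⟨i, hi, rfl⟩ := List.getElem_of_mem hx
  refine ⟨i, ⟨hi, getD_eq_getElem _ _ hi⟩, fun j ⟨hj, hjx⟩ => ?_⟩
  rw [getD_eq_getElem _ _ hj] at hjx
  exact hM.getElem_inj_iff.1 hjx

theorem Nodup.lt_of_pair_sublist (hM : M.Nodup) (h : [x, y] <+ M) {i j : ℕ}
    (hi : i < M.length) (hj : j < M.length) (hx : M.getD i z = x) (hy : M.getD j z = y) :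
    i < j := by
  obtain ⟨f, hf⟩ := sublist_iff_exists_fin_orderEmbedding_get_eq.1 h
  rw [getD_eq_getElem _ _ hi] at hx
  rw [getD_eq_getElem _ _ hj] at hy
  have hfi : i = f 0 := hM.getElem_inj_iff.1 (hx.trans (hf 0))
  have hfj : j = f 1 := hM.getElem_inj_iff.1 (hy.trans (hf 1))
  rw [hfi, hfj, Fin.val_fin_lt]
  exact f.strictMono Fin.zero_lt_one

end List

def diagonals (C : Finset (ℤ × ℤ)) : Multiset (Sym2 (ℤ × ℤ)) :=
  ∑ c ∈ C, {infDiag c, supDiag c}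

theorem mem_diagonals {C : Finset (ℤ × ℤ)} {z : Sym2 (ℤ × ℤ)} :
    z ∈ diagonals C ↔ ∃ c ∈ C, z = infDiag c ∨ z = supDiag c := by
  simp [diagonals, Multiset.mem_sum]

theorem card_diagonals (C : Finset (ℤ × ℤ)) : Multiset.card (diagonals C) = 2 * C.card := by
  simp [diagonals, Multiset.card_sum, mul_comm]

theorem nodup_diagonals (C : Finset (ℤ × ℤ)) : (diagonals C).Nodup := by
  have : diagonals C = C.val.bind fun c => {infDiag c, supDiag c} := rfl
  rw [this, Multiset.nodup_bind]
  refine ⟨fun c _ => by simp [infDiag_ne_supDiag], C.nodup.pairwise fun c _ d _ hcd => ?_⟩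
  simp [Function.onFun, infDiag_injective.ne hcd.symm, supDiag_injective.ne hcd.symm,
    infDiag_ne_supDiag, (infDiag_ne_supDiag _ _).symm]

structure IsEmbroideryList (C : Finset (ℤ × ℤ)) (L : List ((ℤ × ℤ) × (ℤ × ℤ))) : Prop where
  coe_map_diagOf : (L.map diagOf : Multiset (Sym2 (ℤ × ℤ))) = diagonals C
  pair_sublist : ∀ c ∈ C, [infDiag c, supDiag c].Sublist (L.map diagOf)
  isChain : L.IsChain fun e f => Adj e.2 f.1

theorem IsEmbroideryList.isEmbroidery {C : Finset (ℤ × ℤ)} {L : List ((ℤ × ℤ) × (ℤ × ℤ))}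
    (hL : IsEmbroideryList C L) : IsEmbroidery C fun i => L.getD i default := by
  set M := L.map diagOf
  have hnodup : M.Nodup := Multiset.coe_nodup.1 (hL.coe_map_diagOf ▸ nodup_diagonals C)
  have hlen : M.length = 2 * C.card := by
    rw [← Multiset.coe_card, hL.coe_map_diagOf, card_diagonals]
  have hdiag : ∀ i, diagOf (L.getD i default) = M.getD i (diagOf default) :=
    fun i => (List.getD_map L default diagOf).symm
  simp only [IsEmbroidery, hdiag, ← hlen]
  refine ⟨fun i hi => ?_, fun c hc => ?_, fun c hc => ?_, fun c hc i j hi hj => ?_, fun i hi => ?_⟩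
  · rw [List.getD_eq_getElem _ _ hi]
    exact mem_diagonals.1 (hL.coe_map_diagOf ▸ Multiset.mem_coe.2 (List.getElem_mem hi))
  · exact hnodup.existsUnique_getD_eq ((hL.pair_sublist c hc).subset (by simp))
  · exact hnodup.existsUnique_getD_eq ((hL.pair_sublist c hc).subset (by simp))
  · exact hnodup.lt_of_pair_sublist (hL.pair_sublist c hc) hi hj
  · have hi' : i + 1 < L.length := by simpa [M] using hi
    rw [List.getD_eq_getElem _ _ hi', List.getD_eq_getElem _ _ (Nat.lt_of_succ_lt hi')]
    exact List.isChain_iff_getElem.1 hL.isChain i hi'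

theorem isEmbroideryList_singleton {c : ℤ × ℤ} {e f : (ℤ × ℤ) × (ℤ × ℤ)}
    (he : diagOf e = infDiag c) (hf : diagOf f = supDiag c) : IsEmbroideryList {c} [e, f] where
  coe_map_diagOf := by simp [diagonals, he, hf]; rfl
  pair_sublist := by simp [he, hf]
  isChain := List.isChain_pair.2 <| adj_of_mem_infDiag_of_mem_supDiag
    (he ▸ snd_mem_diagOf e) (hf ▸ fst_mem_diagOf f)

theorem IsEmbroideryList.splice {C K : Finset (ℤ × ℤ)} (hKC : K ⊆ C)
    {LK T : List ((ℤ × ℤ) × (ℤ × ℤ))} {e r k l : (ℤ × ℤ) × (ℤ × ℤ)}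
    (hK : IsEmbroideryList K LK) (hR : IsEmbroideryList (C \ K) (r :: T))
    (her : diagOf e = diagOf r) (hk : LK.head? = some k) (hek : Adj e.2 k.1)
    (hl : LK.getLast? = some l) (hlr : l.2 = r.2) : IsEmbroideryList C (e :: (LK ++ T)) where
  coe_map_diagOf := by
    have hKd := hK.coe_map_diagOf
    have hRd := hR.coe_map_diagOf
    rw [diagonals, ← Finset.sum_sdiff hKC]
    rw [diagonals] at hKd hRd
    rw [← hKd, ← hRd]
    simpa [her, add_comm] using List.perm_middle.symm
  pair_sublist c hc := by
    by_cases hcK : c ∈ K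
    · refine (hK.pair_sublist c hcK).trans ?_
      simp only [List.map_cons, List.map_append]
      exact (List.sublist_append_left _ _).cons _
    · refine (hR.pair_sublist c (Finset.mem_sdiff.2 ⟨hc, hcK⟩)).trans ?_
      simp only [List.map_cons, List.map_append, her]
      exact (List.sublist_append_right _ _).cons_cons _
  isChain := by
    have hRc := List.isChain_cons.1 hR.isChain
    refine List.isChain_cons.2 ⟨?_, List.isChain_append.2 ⟨hK.isChain, hRc.2, ?_⟩⟩
    · simpa [List.head?_append, hk] using hek
    · simpa [hl, hlr] using hRc.1

theorem IsConnectedOn.exists_isEmbroideryList {C : Finset (ℤ × ℤ)}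
    (hC : IsConnectedOn FourAdj C) {c : ℤ × ℤ} (hc : c ∈ C) {e f : (ℤ × ℤ) × (ℤ × ℤ)}
    (he : diagOf e = infDiag c) (hf : diagOf f = supDiag c) :
    ∃ L, IsEmbroideryList C L ∧ L.head? = some e ∧ L.getLast? = some f := by
  classical
  induction C using Finset.strongInduction generalizing c e f with
  | H C ih =>
  by_cases hCc : C = {c}
  · exact ⟨[e, f], hCc ▸ isEmbroideryList_singleton he hf, rfl, rfl⟩
  obtain ⟨K, hKC, hcK, hK, hR, d, hdK, hdc⟩ := hC.exists_split hc hCc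
  obtain ⟨x, y, hxc, hxd, hyc, hyd⟩ := exists_shared_corners (symm hdc)
  obtain ⟨LK, hLK, hk, hl⟩ := ih K (Finset.ssubset_iff_subset_ne.2 ⟨hKC, fun h => hcK (h ▸ hc)⟩)
    hK hdK (diagOf_mk_other hxd) (diagOf_other_mk hyd)
  obtain ⟨_ | ⟨r, T⟩, hLR, hr, hf'⟩ := ih (C \ K) (Finset.sdiff_ssubset hKC hK.1) hR
    (Finset.mem_sdiff.2 ⟨hc, hcK⟩) (diagOf_other_mk hyc) hf
  · simp at hr
  obtain rfl := Option.some.inj hr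
  refine ⟨e :: (LK ++ T), hLK.splice hKC hLR (he.trans (diagOf_other_mk hyc).symm) hk
    (adj_of_mem_infDiag_of_mem_supDiag (he ▸ snd_mem_diagOf e) hxc) hl rfl, rfl, ?_⟩
  cases T with
  | nil =>
    obtain rfl := Option.some.inj hf'
    exact absurd ((diagOf_other_mk hyc).symm.trans hf) (infDiag_ne_supDiag c c)
  | cons t T =>
    rw [List.getLast?_cons_cons] at hf'
    rw [List.getLast?_cons, List.getLast?_append, hf']
    rfl

/-- Every 4-connected configuration is brodable. -/
theorem fourConnected_brodable (C : Finset (ℤ × ℤ)) (hC : FourConnected C) :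
    Brodable C := by
  have hC' : IsConnectedOn FourAdj C := hC
  obtain ⟨c, hc⟩ := hC.1
  obtain ⟨L, hL, -⟩ := hC'.exists_isEmbroideryList hc (e := (c, (c.1 + 1, c.2 + 1)))
    (f := ((c.1, c.2 + 1), (c.1 + 1, c.2))) rfl rfl
  exact ⟨_, hL.isEmbroidery⟩
end

section
/- For every n ≥ 1 and every k with 1 ≤ k ≤ n, the line of n cells admits a closed embroidery whose first diagonal is the inferior diagonal of the cell (k−1,0), traversed from its bottom-left vertex (k−1,0) to (k,1). -/
/-- The line of `n` cells: `{(i, 0) : 0 ≤ i < n}`. -/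
def lineConfig (n : ℕ) : Finset (ℤ × ℤ) :=
  (Finset.range n).image (fun i : ℕ => ((i : ℤ), 0))


/-! The embroidery runs right along the inferior diagonals of the cells `k-1, …, n-1`
(bottom to top), back left along the superior diagonals of the cells `n-1, …, k`, on
along the inferior diagonals of the cells `k-2, …, 0` (now top to bottom), back right
along the superior diagonals of the cells `0, …, k-2`, and ends with the superior diagonal
of the cell `k-1`, from `(k-1, 1)` to `(k, 0)`, which is adjacent to the start `(k-1, 0)`.
Each cell thus has one explicit position for each of its diagonals, and all the conditions
reduce to linear arithmetic in these positions. -/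

lemma adj_of_taxicab {u v : ℤ × ℤ}
    (h : (u.1 = v.1 ∧ (u.2 - v.2 = 1 ∨ u.2 - v.2 = -1)) ∨
      (u.2 = v.2 ∧ (u.1 - v.1 = 1 ∨ u.1 - v.1 = -1))) : Adj u v := by
  unfold Adj
  rcases h with ⟨h₁, h₂ | h₂⟩ | ⟨h₁, h₂ | h₂⟩ <;> simp [h₁, h₂]

theorem IsEmbroidery.of_positions {C : Finset (ℤ × ℤ)} {d : ℕ → (ℤ × ℤ) × (ℤ × ℤ)}
    (p q : ℤ × ℤ → ℕ)
    (hcover : ∀ i < 2 * C.card, ∃ c ∈ C, i = p c ∨ i = q c)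
    (hp : ∀ c ∈ C, ∀ i < 2 * C.card, diagOf (d i) = infDiag c ↔ i = p c)
    (hq : ∀ c ∈ C, ∀ i < 2 * C.card, diagOf (d i) = supDiag c ↔ i = q c)
    (hpq : ∀ c ∈ C, p c < q c) (hq_lt : ∀ c ∈ C, q c < 2 * C.card)
    (hadj : ∀ i, i + 1 < 2 * C.card → Adj (d i).2 (d (i + 1)).1) :
    IsEmbroidery C d := by
  refine ⟨fun i hi => ?_, fun c hc => ?_, fun c hc => ?_, fun c hc i j hi hj hi' hj' => ?_, hadj⟩
  · obtain ⟨c, hc, rfl | rfl⟩ := hcover i hi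
    · exact ⟨c, hc, .inl ((hp c hc _ hi).2 rfl)⟩
    · exact ⟨c, hc, .inr ((hq c hc _ hi).2 rfl)⟩
  · have hp_lt := (hpq c hc).trans (hq_lt c hc)
    exact ⟨p c, ⟨hp_lt, (hp c hc _ hp_lt).2 rfl⟩, fun i ⟨hi, h⟩ => (hp c hc i hi).1 h⟩
  · exact ⟨q c, ⟨hq_lt c hc, (hq c hc _ (hq_lt c hc)).2 rfl⟩, fun i ⟨hi, h⟩ => (hq c hc i hi).1 h⟩
  · rw [(hp c hc i hi).1 hi', (hq c hc j hj).1 hj']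
    exact hpq c hc

lemma card_lineConfig (n : ℕ) : (lineConfig n).card = n := by
  rw [lineConfig, Finset.card_image_of_injective _ fun a b h => by simpa using h]
  exact Finset.card_range n

lemma forall_mem_lineConfig {n : ℕ} {P : ℤ × ℤ → Prop} :
    (∀ c ∈ lineConfig n, P c) ↔ ∀ a < n, P (a, 0) := by
  simp [lineConfig]

lemma exists_mem_lineConfig {n : ℕ} {P : ℤ × ℤ → Prop} :
    (∃ c ∈ lineConfig n, P c) ↔ ∃ a < n, P (a, 0) := by
  simp [lineConfig]

section LineEmbroidery

variable (n k : ℕ)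

def lineEmbroidery (i : ℕ) : (ℤ × ℤ) × (ℤ × ℤ) :=
  if (i : ℤ) ≤ n - k then ((k - 1 + i, 0), (k + i, 1))
  else if (i : ℤ) ≤ 2 * n - 2 * k then ((2 * n - k - i + 1, 0), (2 * n - k - i, 1))
  else if (i : ℤ) ≤ 2 * n - k - 1 then ((2 * n - k - i, 1), (2 * n - k - 1 - i, 0))
  else if (i : ℤ) ≤ 2 * n - 2 then ((i - (2 * n - k), 1), (i - (2 * n - k) + 1, 0))
  else ((k - 1, 1), (k, 0))

def lineInfPos (a : ℤ) : ℕ :=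
  if k ≤ a + 1 then (a + 1 - k).toNat else (2 * n - k - 1 - a).toNat

def lineSupPos (a : ℤ) : ℕ :=
  if k ≤ a then (2 * n - k - a).toNat
  else if a + 2 ≤ k then (2 * n - k + a).toNat
  else 2 * n - 1

variable {n k}

lemma diagOf_lineEmbroidery_eq_infDiag_iff (hk : k ≤ n) {a : ℕ} (ha : a < n) (i : ℕ) :
    diagOf (lineEmbroidery n k i) = infDiag (a, 0) ↔ i = lineInfPos n k a := by
  simp only [lineEmbroidery, lineInfPos]
  split_ifs <;> simp only [diagOf, infDiag, Sym2.eq_iff, Prod.mk.injEq] <;> norm_num <;> omega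

lemma diagOf_lineEmbroidery_eq_supDiag_iff (hk₁ : 1 ≤ k) (hk : k ≤ n) {a : ℕ} (ha : a < n)
    {i : ℕ} (hi : i < 2 * n) :
    diagOf (lineEmbroidery n k i) = supDiag (a, 0) ↔ i = lineSupPos n k a := by
  simp only [lineEmbroidery, lineSupPos]
  split_ifs <;> simp only [diagOf, supDiag, Sym2.eq_iff, Prod.mk.injEq] <;> norm_num <;> omega

lemma adj_lineEmbroidery_succ {i : ℕ} (hi : i + 1 < 2 * n) :
    Adj (lineEmbroidery n k i).2 (lineEmbroidery n k (i + 1)).1 := by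
  apply adj_of_taxicab
  simp only [lineEmbroidery]
  split_ifs <;> dsimp only <;> omega

lemma adj_lineEmbroidery_last_first (hk₁ : 1 ≤ k) (hk : k ≤ n) :
    Adj (lineEmbroidery n k (2 * n - 1)).2 (lineEmbroidery n k 0).1 := by
  apply adj_of_taxicab
  simp only [lineEmbroidery]
  split_ifs <;> dsimp only <;> omega

lemma exists_lineInfPos_or_lineSupPos (hk₁ : 1 ≤ k) (hk : k ≤ n) {i : ℕ} (hi : i < 2 * n) :
    ∃ a < n, i = lineInfPos n k a ∨ i = lineSupPos n k a := by
  simp only [lineInfPos, lineSupPos]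
  by_cases h₁ : i ≤ n - k
  · exact ⟨k - 1 + i, by omega, .inl (by split_ifs <;> omega)⟩
  by_cases h₂ : i ≤ 2 * n - 2 * k
  · exact ⟨2 * n - k - i, by omega, .inr (by split_ifs <;> omega)⟩
  by_cases h₃ : i ≤ 2 * n - k - 1
  · exact ⟨2 * n - k - 1 - i, by omega, .inl (by split_ifs <;> omega)⟩
  by_cases h₄ : i ≤ 2 * n - 2
  · exact ⟨i - (2 * n - k), by omega, .inr (by split_ifs <;> omega)⟩
  · exact ⟨k - 1, by omega, .inr (by split_ifs <;> omega)⟩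

lemma lineInfPos_lt_lineSupPos (hk₁ : 1 ≤ k) (hk : k ≤ n) {a : ℕ} (ha : a < n) :
    lineInfPos n k a < lineSupPos n k a := by
  simp only [lineInfPos, lineSupPos]
  split_ifs <;> omega

lemma lineSupPos_lt (hk₁ : 1 ≤ k) (hk : k ≤ n) {a : ℕ} (ha : a < n) :
    lineSupPos n k a < 2 * n := by
  simp only [lineSupPos]
  split_ifs <;> omega

end LineEmbroidery

theorem line_closedEmbroidery_general (n k : ℕ) (hk1 : 1 ≤ k) (hkn : k ≤ n) :
    ∃ d, IsClosedEmbroidery (lineConfig n) d ∧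
      d 0 = (((k : ℤ) - 1, 0), ((k : ℤ), 1)) := by
  refine ⟨lineEmbroidery n k, ⟨?_, ?_⟩, ?_⟩
  · refine .of_positions (fun c => lineInfPos n k c.1) (fun c => lineSupPos n k c.1)
      ?_ ?_ ?_ ?_ ?_ ?_
    all_goals simp only [card_lineConfig, forall_mem_lineConfig, exists_mem_lineConfig]
    · intro i hi
      exact exists_lineInfPos_or_lineSupPos hk1 hkn hi
    · exact fun a ha i _ => diagOf_lineEmbroidery_eq_infDiag_iff hkn ha i
    · exact fun a ha i hi => diagOf_lineEmbroidery_eq_supDiag_iff hk1 hkn ha hi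
    · exact fun a ha => lineInfPos_lt_lineSupPos hk1 hkn ha
    · exact fun a ha => lineSupPos_lt hk1 hkn ha
    · exact fun i hi => adj_lineEmbroidery_succ hi
  · rw [card_lineConfig]
    exact adj_lineEmbroidery_last_first hk1 hkn
  · simp [lineEmbroidery, hkn]

/-- For every `n ≥ 1` and every `1 ≤ k ≤ n`, the line of `n` cells admits a closed
embroidery starting with the inferior diagonal of the cell `(k-1, 0)`, traversed from
`(k-1, 0)` to `(k, 1)`. -/
theorem line_closedEmbroidery (n k : ℕ) (hn : 1 ≤ n) (hk1 : 1 ≤ k) (hkn : k ≤ n) :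
    ∃ d, IsClosedEmbroidery (lineConfig n) d ∧
      d 0 = (((k : ℤ) - 1, 0), ((k : ℤ), 1)) :=
  line_closedEmbroidery_general n k hk1 hkn
end

section
/- Gluing lemma: let C₁ and C₂ be disjoint configurations, let e₁ be a closed embroidery of C₁ and e₂ a closed embroidery of C₂. If the start vertex of the first diagonal of e₂ coincides with the start vertex of some diagonal of e₁, then the configuration C₁ ∪ C₂ is strongly brodable. -/
/-! Insert the closed embroidery `e₂` into `e₁` just before its `i`-th diagonal. Both seams stay
adjacent because `e₂` starts, as `e₁ i` does, at the vertex `(e₁ i).1` and ends next to it. The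
glued sequence is a shuffle of `e₁` and `e₂`; as `C₁` and `C₂` are disjoint, the two diagonals of
each cell still come from one of them, in the same relative order. -/

lemma cell_eq_of_isDiag {c c' : ℤ × ℤ} {s : Sym2 (ℤ × ℤ)}
    (h : s = infDiag c ∨ s = supDiag c) (h' : s = infDiag c' ∨ s = supDiag c') : c = c' := by
  rcases h with rfl | rfl <;> rcases h' with h' | h' <;>
    simp only [infDiag, supDiag, Sym2.eq_iff, Prod.ext_iff] at h' <;> ext <;> omega

lemma IsEmbroidery.mem_of_isDiag {C : Finset (ℤ × ℤ)} {e : ℕ → (ℤ × ℤ) × (ℤ × ℤ)}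
    (h : IsEmbroidery C e) {j : ℕ} {c : ℤ × ℤ} (hj : j < 2 * C.card)
    (hc : diagOf (e j) = infDiag c ∨ diagOf (e j) = supDiag c) : c ∈ C := by
  obtain ⟨c', hc', hdiag⟩ := h.1 j hj
  rwa [cell_eq_of_isDiag hc hdiag]

section Interleaving

variable {α : Type*}

structure IsInterleaving (d e₁ e₂ : ℕ → α) (n₁ n₂ : ℕ) (f₁ f₂ : ℕ → ℕ) : Prop where
  strictMono₁ : StrictMono f₁
  strictMono₂ : StrictMono f₂
  apply₁ : ∀ k < n₁, d (f₁ k) = e₁ k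
  apply₂ : ∀ k < n₂, d (f₂ k) = e₂ k
  lt₁ : ∀ k < n₁, f₁ k < n₁ + n₂
  lt₂ : ∀ k < n₂, f₂ k < n₁ + n₂
  cover : ∀ j < n₁ + n₂, (∃ k < n₁, f₁ k = j) ∨ ∃ k < n₂, f₂ k = j

variable {d e₁ e₂ : ℕ → α} {n₁ n₂ : ℕ} {f₁ f₂ : ℕ → ℕ}

lemma IsInterleaving.symm (h : IsInterleaving d e₁ e₂ n₁ n₂ f₁ f₂) :
    IsInterleaving d e₂ e₁ n₂ n₁ f₂ f₁ where
  strictMono₁ := h.strictMono₂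
  strictMono₂ := h.strictMono₁
  apply₁ := h.apply₂
  apply₂ := h.apply₁
  lt₁ k hk := Nat.add_comm n₁ n₂ ▸ h.lt₂ k hk
  lt₂ k hk := Nat.add_comm n₁ n₂ ▸ h.lt₁ k hk
  cover j hj := (h.cover j (by omega)).symm

lemma IsInterleaving.existsUnique_left (h : IsInterleaving d e₁ e₂ n₁ n₂ f₁ f₂) {P : α → Prop}
    (hP : ∀ j < n₁ + n₂, P (d j) → ∃ k < n₁, f₁ k = j) (hu : ∃! k, k < n₁ ∧ P (e₁ k)) :
    ∃! j, j < n₁ + n₂ ∧ P (d j) := by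
  obtain ⟨k, ⟨hk, hPk⟩, huniq⟩ := hu
  refine ⟨f₁ k, ⟨h.lt₁ k hk, by rwa [h.apply₁ k hk]⟩, ?_⟩
  rintro j ⟨hj, hPj⟩
  obtain ⟨k', hk', rfl⟩ := hP j hj hPj
  rw [huniq k' ⟨hk', by rwa [← h.apply₁ k' hk']⟩]

def insertAt (e₁ e₂ : ℕ → α) (i m j : ℕ) : α :=
  if j < i then e₁ j else if j < i + m then e₂ (j - i) else e₁ (j - m)

variable {i m j : ℕ}

lemma insertAt_of_lt (h : j < i) : insertAt e₁ e₂ i m j = e₁ j := if_pos h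

lemma insertAt_of_mem_Ico (h₁ : i ≤ j) (h₂ : j < i + m) : insertAt e₁ e₂ i m j = e₂ (j - i) := by
  rw [insertAt, if_neg (by omega), if_pos h₂]

lemma insertAt_of_le (h : i + m ≤ j) : insertAt e₁ e₂ i m j = e₁ (j - m) := by
  rw [insertAt, if_neg (by omega), if_neg (by omega)]

lemma isInterleaving_insertAt (hi : i ≤ n₁) :
    IsInterleaving (insertAt e₁ e₂ i n₂) e₁ e₂ n₁ n₂
      (fun k ↦ if k < i then k else k + n₂) (fun k ↦ i + k) where
  strictMono₁ a b hab := by beta_reduce; split_ifs <;> omega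
  strictMono₂ a b hab := by beta_reduce; omega
  apply₁ k _ := by
    split_ifs with hk
    · exact insertAt_of_lt hk
    · rw [insertAt_of_le (by omega), Nat.add_sub_cancel]
  apply₂ k hk := by rw [insertAt_of_mem_Ico (by omega) (by omega), Nat.add_sub_cancel_left]
  lt₁ k hk := by split_ifs <;> omega
  lt₂ k hk := by omega
  cover j hj := by
    by_cases hji : j < i
    · exact Or.inl ⟨j, by omega, if_pos hji⟩
    by_cases hjm : j < i + n₂
    · exact Or.inr ⟨j - i, by omega, by omega⟩
    · exact Or.inl ⟨j - n₂, by omega, by rw [if_neg (by omega)]; omega⟩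

variable {R : α → α → Prop}

lemma rel_insertAt_succ (h₁ : ∀ j, j + 1 < n₁ → R (e₁ j) (e₁ (j + 1)))
    (h₂ : ∀ j, j + 1 < n₂ → R (e₂ j) (e₂ (j + 1))) (hclose₂ : R (e₂ (n₂ - 1)) (e₂ 0))
    (hi : i < n₁) (hR : ∀ x, R x (e₁ i) ↔ R x (e₂ 0)) :
    ∀ j, j + 1 < n₁ + n₂ → R (insertAt e₁ e₂ i n₂ j) (insertAt e₁ e₂ i n₂ (j + 1)) := by
  intro j hj
  rcases lt_or_ge j i with hji | hij
  · rw [insertAt_of_lt hji]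
    rcases lt_or_ge (j + 1) i with hji' | hij'
    · rw [insertAt_of_lt hji']
      exact h₁ j (by omega)
    obtain rfl : i = j + 1 := by omega
    rcases Nat.eq_zero_or_pos n₂ with rfl | hn₂
    · rw [insertAt_of_le le_rfl]
      exact h₁ j hi
    · rw [insertAt_of_mem_Ico le_rfl (by omega), Nat.sub_self]
      exact (hR _).mp (h₁ j hi)
  rcases lt_or_ge (j + 1) (i + n₂) with hj₂ | hj₂
  · rw [insertAt_of_mem_Ico hij (by omega), insertAt_of_mem_Ico (by omega) hj₂,
      Nat.sub_add_comm hij]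
    exact h₂ (j - i) (by omega)
  rcases lt_or_ge j (i + n₂) with hj₂' | hj₂'
  · rw [insertAt_of_mem_Ico hij hj₂', insertAt_of_le hj₂, show j - i = n₂ - 1 by omega,
      show j + 1 - n₂ = i by omega]
    exact (hR _).mpr hclose₂
  · rw [insertAt_of_le hj₂', insertAt_of_le hj₂, Nat.sub_add_comm (by omega)]
    exact h₁ (j - n₂) (by omega)

lemma rel_insertAt_last_first (hclose₁ : R (e₁ (n₁ - 1)) (e₁ 0)) (hi : i < n₁)
    (hR : ∀ x, R x (e₁ i) ↔ R x (e₂ 0)) :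
    R (insertAt e₁ e₂ i n₂ (n₁ + n₂ - 1)) (insertAt e₁ e₂ i n₂ 0) := by
  rw [insertAt_of_le (by omega), show n₁ + n₂ - 1 - n₂ = n₁ - 1 by omega]
  rcases Nat.eq_zero_or_pos i with rfl | hi₀
  · rcases Nat.eq_zero_or_pos n₂ with rfl | hn₂
    · rwa [insertAt_of_le le_rfl]
    · rw [insertAt_of_mem_Ico le_rfl (by omega)]
      exact (hR _).mp hclose₁
  · rwa [insertAt_of_lt hi₀]

end Interleaving

section Union

variable {C₁ C₂ : Finset (ℤ × ℤ)} {d e₁ e₂ : ℕ → (ℤ × ℤ) × (ℤ × ℤ)} {f₁ f₂ : ℕ → ℕ}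

lemma IsInterleaving.exists_of_isDiag
    (h : IsInterleaving d e₁ e₂ (2 * C₁.card) (2 * C₂.card) f₁ f₂) (hdisj : Disjoint C₁ C₂)
    (h₂ : IsEmbroidery C₂ e₂) {c : ℤ × ℤ} (hc : c ∈ C₁) {j : ℕ}
    (hj : j < 2 * C₁.card + 2 * C₂.card)
    (hdiag : diagOf (d j) = infDiag c ∨ diagOf (d j) = supDiag c) :
    ∃ k < 2 * C₁.card, f₁ k = j := by
  refine (h.cover j hj).resolve_right ?_
  rintro ⟨k, hk, rfl⟩
  rw [h.apply₂ k hk] at hdiag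
  exact Finset.disjoint_left.mp hdisj hc (h₂.mem_of_isDiag hk hdiag)

lemma IsInterleaving.embroidery_conditions_left
    (h : IsInterleaving d e₁ e₂ (2 * C₁.card) (2 * C₂.card) f₁ f₂) (hdisj : Disjoint C₁ C₂)
    (h₁ : IsEmbroidery C₁ e₁) (h₂ : IsEmbroidery C₂ e₂) {c : ℤ × ℤ} (hc : c ∈ C₁) :
    (∃! j, j < 2 * C₁.card + 2 * C₂.card ∧ diagOf (d j) = infDiag c) ∧
    (∃! j, j < 2 * C₁.card + 2 * C₂.card ∧ diagOf (d j) = supDiag c) ∧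
    (∀ j j', j < 2 * C₁.card + 2 * C₂.card → j' < 2 * C₁.card + 2 * C₂.card →
      diagOf (d j) = infDiag c → diagOf (d j') = supDiag c → j < j') := by
  obtain ⟨-, hinf, hsup, horder, -⟩ := h₁
  refine ⟨h.existsUnique_left (P := (diagOf · = infDiag c))
      (fun j hj hd ↦ h.exists_of_isDiag hdisj h₂ hc hj (.inl hd)) (hinf c hc),
    h.existsUnique_left (P := (diagOf · = supDiag c))
      (fun j hj hd ↦ h.exists_of_isDiag hdisj h₂ hc hj (.inr hd)) (hsup c hc), ?_⟩
  intro j j' hj hj' hdj hdj'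
  obtain ⟨k, hk, rfl⟩ := h.exists_of_isDiag hdisj h₂ hc hj (.inl hdj)
  obtain ⟨k', hk', rfl⟩ := h.exists_of_isDiag hdisj h₂ hc hj' (.inr hdj')
  rw [h.apply₁ k hk] at hdj
  rw [h.apply₁ k' hk'] at hdj'
  exact h.strictMono₁ (horder c hc k k' hk hk' hdj hdj')

theorem IsEmbroidery.union_of_isInterleaving (hdisj : Disjoint C₁ C₂) (h₁ : IsEmbroidery C₁ e₁)
    (h₂ : IsEmbroidery C₂ e₂) (h : IsInterleaving d e₁ e₂ (2 * C₁.card) (2 * C₂.card) f₁ f₂)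
    (hadj : ∀ j, j + 1 < 2 * C₁.card + 2 * C₂.card → Adj (d j).2 (d (j + 1)).1) :
    IsEmbroidery (C₁ ∪ C₂) d := by
  have hcard : 2 * (C₁ ∪ C₂).card = 2 * C₁.card + 2 * C₂.card := by
    rw [Finset.card_union_of_disjoint hdisj, Nat.mul_add]
  have hcells : ∀ c ∈ C₁ ∪ C₂,
      (∃! j, j < 2 * C₁.card + 2 * C₂.card ∧ diagOf (d j) = infDiag c) ∧
      (∃! j, j < 2 * C₁.card + 2 * C₂.card ∧ diagOf (d j) = supDiag c) ∧
      (∀ j j', j < 2 * C₁.card + 2 * C₂.card → j' < 2 * C₁.card + 2 * C₂.card →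
        diagOf (d j) = infDiag c → diagOf (d j') = supDiag c → j < j') := by
    intro c hc
    rcases Finset.mem_union.mp hc with hc | hc
    · exact h.embroidery_conditions_left hdisj h₁ h₂ hc
    · have := h.symm.embroidery_conditions_left hdisj.symm h₂ h₁ hc
      rwa [Nat.add_comm (2 * C₂.card)] at this
  rw [IsEmbroidery, hcard]
  refine ⟨fun j hj ↦ ?_, fun c hc ↦ (hcells c hc).1, fun c hc ↦ (hcells c hc).2.1,
    fun c hc ↦ (hcells c hc).2.2, hadj⟩
  rcases h.cover j hj with ⟨k, hk, rfl⟩ | ⟨k, hk, rfl⟩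
  · obtain ⟨c, hc, hdiag⟩ := h₁.1 k hk
    exact ⟨c, Finset.mem_union_left _ hc, by rwa [h.apply₁ k hk]⟩
  · obtain ⟨c, hc, hdiag⟩ := h₂.1 k hk
    exact ⟨c, Finset.mem_union_right _ hc, by rwa [h.apply₂ k hk]⟩

end Union

/-- Gluing lemma: if two disjoint configurations admit closed embroideries `e₁` and
`e₂`, and the start vertex of the first diagonal of `e₂` coincides with the start
vertex of some diagonal of `e₁`, then the union is strongly brodable. -/
theorem glue_closedEmbroideries (C₁ C₂ : Finset (ℤ × ℤ)) (hdisj : Disjoint C₁ C₂)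
    (e₁ e₂ : ℕ → (ℤ × ℤ) × (ℤ × ℤ))
    (h₁ : IsClosedEmbroidery C₁ e₁) (h₂ : IsClosedEmbroidery C₂ e₂)
    (i : ℕ) (hi : i < 2 * C₁.card) (hstart : (e₁ i).1 = (e₂ 0).1) :
    StronglyBrodable (C₁ ∪ C₂) := by
  obtain ⟨E₁, hclose₁⟩ := h₁
  obtain ⟨E₂, hclose₂⟩ := h₂
  have hR : ∀ x : (ℤ × ℤ) × (ℤ × ℤ), Adj x.2 (e₁ i).1 ↔ Adj x.2 (e₂ 0).1 := by
    simp only [hstart, implies_true]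
  have hchain := rel_insertAt_succ (R := fun x y : (ℤ × ℤ) × (ℤ × ℤ) ↦ Adj x.2 y.1)
    E₁.2.2.2.2 E₂.2.2.2.2 hclose₂ hi hR
  refine ⟨insertAt e₁ e₂ i (2 * C₂.card),
    E₁.union_of_isInterleaving hdisj E₂ (isInterleaving_insertAt hi.le) hchain, ?_⟩
  rw [Finset.card_union_of_disjoint hdisj, Nat.mul_add]
  exact rel_insertAt_last_first (R := fun x y : (ℤ × ℤ) × (ℤ × ℤ) ↦ Adj x.2 y.1) hclose₁ hi hR
end

section
/- For every p ≥ 2, the staircase with landing E_{1,p,1} is strongly brodable. -/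
/-- The staircase with landing `E_{g,p,d}`:
`{(i, −i) : 0 ≤ i ≤ g−1} ∪ {(g−1+j, −g) : 1 ≤ j ≤ p} ∪ {(g+p+k−1, −g−k) : 1 ≤ k ≤ d}`. -/
def stairLanding (g p d : ℕ) : Finset (ℤ × ℤ) :=
  (Finset.range g).image (fun i : ℕ => ((i : ℤ), -(i : ℤ))) ∪
  (Finset.range p).image (fun j : ℕ => ((g : ℤ) + j, -(g : ℤ))) ∪
  (Finset.range d).image (fun k : ℕ => ((g : ℤ) + p + k, -(g : ℤ) - 1 - k))

/-!
The needle stitches both diagonals of `(0,0)`, walks right along the landing stitching the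
inferior diagonals of `(1,-1), …, (p,-1)`, then the superior diagonal of `(p,-1)` and both
diagonals of `(p+1,-2)`, and walks back left stitching the superior diagonals of
`(p-1,-1), …, (1,-1)`. It ends at `(1,0)`, next to its starting vertex `(0,0)`.

A diagonal determines its cell and its kind, so as soon as the `2n` stitches meet every
cell first through its inferior and later through its superior diagonal, counting shows that
no diagonal is met twice.
-/

/-- The kind `false` is the inferior diagonal, `true` the superior one. -/
def diag : (ℤ × ℤ) × Bool → Sym2 (ℤ × ℤ)
  | (c, false) => infDiag c
  | (c, true) => supDiag c

/-- The diagonal `diag x` run from its left endpoint to its right one, or backwards if `rev`. -/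
def stitch : (ℤ × ℤ) × Bool → Bool → (ℤ × ℤ) × (ℤ × ℤ)
  | ((a, b), false), false => ((a, b), (a + 1, b + 1))
  | ((a, b), false), true => ((a + 1, b + 1), (a, b))
  | ((a, b), true), false => ((a, b + 1), (a + 1, b))
  | ((a, b), true), true => ((a + 1, b), (a, b + 1))

lemma diagOf_stitch (x : (ℤ × ℤ) × Bool) (rev : Bool) : diagOf (stitch x rev) = diag x := by
  obtain ⟨⟨a, b⟩, _ | _⟩ := x <;> cases rev <;> first | rfl | exact Sym2.eq_swap

lemma diag_injective : Function.Injective diag := by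
  rintro ⟨⟨a, b⟩, _ | _⟩ ⟨⟨a', b'⟩, _ | _⟩ h <;>
    simp only [diag, infDiag, supDiag, Sym2.eq_iff, Prod.ext_iff] at h <;>
    simp only [Prod.ext_iff, and_true, and_false, Bool.false_eq_true, Bool.true_eq_false] <;> omega

lemma adj_iff {u v : ℤ × ℤ} :
    Adj u v ↔ (u.2 = v.2 ∧ (u.1 = v.1 + 1 ∨ v.1 = u.1 + 1)) ∨
      (u.1 = v.1 ∧ (u.2 = v.2 + 1 ∨ v.2 = u.2 + 1)) := by
  rw [Adj]
  generalize hx : u.1 - v.1 = x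
  generalize hy : u.2 - v.2 = y
  constructor
  · intro h
    have hx1 : |x| ≤ 1 := sq_le_one_iff_abs_le_one x |>.mp (by nlinarith [sq_nonneg y])
    have hy1 : |y| ≤ 1 := sq_le_one_iff_abs_le_one y |>.mp (by nlinarith [sq_nonneg x])
    rw [abs_le] at hx1 hy1
    obtain rfl | rfl | rfl : x = -1 ∨ x = 0 ∨ x = 1 := by omega
    all_goals obtain rfl | rfl | rfl : y = -1 ∨ y = 0 ∨ y = 1 := by omega
    all_goals norm_num at h
    all_goals omega
  · intro h
    obtain ⟨rfl, rfl | rfl⟩ | ⟨rfl, rfl | rfl⟩ :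
        (y = 0 ∧ (x = 1 ∨ x = -1)) ∨ (x = 0 ∧ (y = 1 ∨ y = -1)) := by omega
    all_goals norm_num

structure IsSchedule (C : Finset (ℤ × ℤ)) (σ : ℕ → (ℤ × ℤ) × Bool) : Prop where
  mem : ∀ i < 2 * C.card, (σ i).1 ∈ C
  cover : ∀ c ∈ C, ∃ i j, i < j ∧ j < 2 * C.card ∧ σ i = (c, false) ∧ σ j = (c, true)

namespace IsSchedule

variable {C : Finset (ℤ × ℤ)} {σ : ℕ → (ℤ × ℤ) × Bool}

lemma image_range (hσ : IsSchedule C σ) :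
    (Finset.range (2 * C.card)).image σ = C ×ˢ Finset.univ := by
  refine Finset.Subset.antisymm ?_ ?_
  · simp only [Finset.image_subset_iff, Finset.mem_range, Finset.mem_product,
      Finset.mem_univ, and_true]
    exact hσ.mem
  · rintro ⟨c, k⟩ hc
    obtain ⟨i, j, hij, hj, hi, hj'⟩ := hσ.cover c (Finset.mem_product.mp hc).1
    rw [Finset.mem_image]
    cases k
    · exact ⟨i, Finset.mem_range.mpr (hij.trans hj), hi⟩
    · exact ⟨j, Finset.mem_range.mpr hj, hj'⟩

lemma injOn (hσ : IsSchedule C σ) : Set.InjOn σ (Finset.range (2 * C.card)) := by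
  rw [← Finset.card_image_iff, hσ.image_range, Finset.card_product, Finset.card_univ,
    Fintype.card_bool, Finset.card_range, mul_comm]

lemma isEmbroidery_stitch (hσ : IsSchedule C σ) {rev : ℕ → Bool}
    (hadj : ∀ i, i + 1 < 2 * C.card →
      Adj (stitch (σ i) (rev i)).2 (stitch (σ (i + 1)) (rev (i + 1))).1) :
    IsEmbroidery C fun i => stitch (σ i) (rev i) := by
  have hdiag : ∀ i x, diagOf (stitch (σ i) (rev i)) = diag x → σ i = x := fun i x h =>
    diag_injective ((diagOf_stitch _ _).symm.trans h)
  have hunique : ∀ i j, i < 2 * C.card → j < 2 * C.card → σ i = σ j → i = j :=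
    fun i j hi hj => hσ.injOn (Finset.mem_range.mpr hi) (Finset.mem_range.mpr hj)
  refine ⟨fun i hi => ?_, fun c hc => ?_, fun c hc => ?_,
    fun c hc i j hi hj hinf hsup => ?_, hadj⟩
  · refine ⟨(σ i).1, hσ.mem i hi, ?_⟩
    rw [diagOf_stitch]
    obtain ⟨c, _ | _⟩ := σ i
    exacts [Or.inl rfl, Or.inr rfl]
  · obtain ⟨i, j, hij, hj, hi, -⟩ := hσ.cover c hc
    refine ⟨i, ⟨hij.trans hj, by rw [diagOf_stitch, hi]; rfl⟩, fun y ⟨hy, hyd⟩ => ?_⟩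
    exact hunique y i hy (hij.trans hj) ((hdiag y (c, false) hyd).trans hi.symm)
  · obtain ⟨i, j, hij, hj, -, hj'⟩ := hσ.cover c hc
    refine ⟨j, ⟨hj, by rw [diagOf_stitch, hj']; rfl⟩, fun y ⟨hy, hyd⟩ => ?_⟩
    exact hunique y j hy hj ((hdiag y (c, true) hyd).trans hj'.symm)
  · obtain ⟨i', j', hij, hj', hi', hj''⟩ := hσ.cover c hc
    rw [hunique i i' hi (hij.trans hj') ((hdiag i (c, false) hinf).trans hi'.symm),
      hunique j j' hj hj' ((hdiag j (c, true) hsup).trans hj''.symm)]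
    exact hij

end IsSchedule

lemma mem_stairLanding_one_one {p : ℕ} {c : ℤ × ℤ} :
    c ∈ stairLanding 1 p 1 ↔
      c = (0, 0) ∨ (c.2 = -1 ∧ 1 ≤ c.1 ∧ c.1 ≤ p) ∨ c = ((p : ℤ) + 1, -2) := by
  obtain ⟨a, b⟩ := c
  simp only [stairLanding, Finset.mem_union, Finset.mem_image, Finset.mem_range, Prod.ext_iff]
  constructor
  · rintro ((⟨i, hi, rfl, rfl⟩ | ⟨j, hj, rfl, rfl⟩) | ⟨k, hk, rfl, rfl⟩) <;> omega
  · rintro (⟨rfl, rfl⟩ | ⟨rfl, h1, h2⟩ | ⟨rfl, rfl⟩)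
    · exact Or.inl (Or.inl ⟨0, Nat.one_pos, by simp, by simp⟩)
    · exact Or.inl (Or.inr ⟨(a - 1).toNat, by omega, by omega, by simp⟩)
    · exact Or.inr ⟨0, Nat.one_pos, by push_cast; ring, by norm_num⟩

lemma card_stairLanding_one_one (p : ℕ) : (stairLanding 1 p 1).card = p + 2 := by
  have hinj : Function.Injective fun j : ℕ => (((1 : ℕ) : ℤ) + j, -((1 : ℕ) : ℤ)) :=
    fun j j' h => by simpa using h
  rw [stairLanding, Finset.card_union_of_disjoint (by simp [Finset.disjoint_left]),
    Finset.card_union_of_disjoint (by simp), Finset.card_image_of_injective _ hinj,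
    Finset.range_one, Finset.image_singleton, Finset.image_singleton, Finset.card_singleton,
    Finset.card_singleton, Finset.card_range]
  ring

def landingSchedule (p i : ℕ) : (ℤ × ℤ) × Bool :=
  if i = 0 then ((0, 0), false)
  else if i = 1 then ((0, 0), true)
  else if i ≤ p + 1 then (((i : ℤ) - 1, -1), false)
  else if i = p + 2 then (((p : ℤ), -1), true)
  else if i = p + 3 then (((p : ℤ) + 1, -2), false)
  else if i = p + 4 then (((p : ℤ) + 1, -2), true)
  else ((2 * (p : ℤ) + 4 - i, -1), true)

def landingEmbroidery (p i : ℕ) : (ℤ × ℤ) × (ℤ × ℤ) :=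
  stitch (landingSchedule p i) (p + 4 ≤ i)

lemma isSchedule_landingSchedule {p : ℕ} (hp : 0 < p) :
    IsSchedule (stairLanding 1 p 1) (landingSchedule p) where
  mem i hi := by
    rw [card_stairLanding_one_one] at hi
    rw [mem_stairLanding_one_one, landingSchedule]
    split_ifs <;> grind
  cover c hc := by
    rw [card_stairLanding_one_one]
    obtain rfl | ⟨hb, h1, h2⟩ | rfl := mem_stairLanding_one_one.mp hc
    · exact ⟨0, 1, by omega, by omega, by simp [landingSchedule], by simp [landingSchedule]⟩
    · obtain ⟨k, rfl⟩ : ∃ k : ℕ, c = ((k : ℤ), -1) :=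
        ⟨c.1.toNat, Prod.ext (by dsimp only; omega) hb⟩
      dsimp only at h1 h2
      obtain rfl | hkp := eq_or_ne k p
      · refine ⟨k + 1, k + 2, by omega, by omega, ?_, ?_⟩ <;>
          simp (disch := omega) only [landingSchedule, if_pos, if_neg] <;> grind
      · refine ⟨k + 1, 2 * p + 4 - k, by omega, by omega, ?_, ?_⟩ <;>
          simp (disch := omega) only [landingSchedule, if_pos, if_neg] <;> grind
    · exact ⟨p + 3, p + 4, by omega, by omega, by simp [landingSchedule],
        by simp [landingSchedule]⟩

lemma landingEmbroidery_adj {p i : ℕ} (hp : 0 < p) (hi : i + 1 < 2 * (p + 2)) :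
    Adj (landingEmbroidery p i).2 (landingEmbroidery p (i + 1)).1 := by
  rw [adj_iff]
  obtain h | h | h | h | h | h | h | h : i = 0 ∨ i = 1 ∨ (2 ≤ i ∧ i ≤ p) ∨ i = p + 1 ∨
      i = p + 2 ∨ i = p + 3 ∨ i = p + 4 ∨ p + 5 ≤ i := by omega
  all_goals
    simp (disch := omega) only [landingEmbroidery, landingSchedule, if_pos, if_neg, stitch,
      decide_eq_true, decide_eq_false]
    grind

lemma landingEmbroidery_closed {p : ℕ} (hp : 2 ≤ p) :
    Adj (landingEmbroidery p (2 * (p + 2) - 1)).2 (landingEmbroidery p 0).1 := by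
  simp (disch := omega) only [landingEmbroidery, landingSchedule, if_pos, if_neg, stitch,
    decide_eq_true, decide_eq_false]
  grind [adj_iff]

/-- For every `p ≥ 2`, the staircase with landing `E_{1,p,1}` is strongly brodable. -/
theorem stairLanding_one_one_stronglyBrodable (p : ℕ) (hp : 2 ≤ p) :
    StronglyBrodable (stairLanding 1 p 1) := by
  have hp0 : 0 < p := by omega
  refine ⟨landingEmbroidery p, (isSchedule_landingSchedule hp0).isEmbroidery_stitch ?_, ?_⟩ <;>
    rw [card_stairLanding_one_one]
  · exact fun i hi => landingEmbroidery_adj hp0 hi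
  · exact landingEmbroidery_closed hp
end
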